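/- The fullerene nanodisc D_2 admits no proper total coloring with a set of 4 colors in which all 24 radial edges receive one common color. -/

import Mathlib

/-- A proper total coloring of `G`: `cv` colors the vertices, `ce` colors the edges
(as unordered pairs); adjacent vertices get different colors, an edge gets a color
different from both of its endpoints, and edges sharing an endpoint get different colors. -/
def IsTotalColoring {V C : Type*} (G : SimpleGraph V) (cv : V → C) (ce : Sym2 V → C) : Prop :=
  (∀ ⦃u v : V⦄, G.Adj u v → cv u ≠ cv v) ∧
  (∀ ⦃u v : V⦄, G.Adj u v → ce s(u, v) ≠ cv u) ∧
  (∀ ⦃u v w : V⦄, G.Adj u v → G.Adj u w → v ≠ w → ce s(u, v) ≠ ce s(u, w))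

/-- The vertices of the fullerene nanodisc `D_2`: the outer 6-cycle `O`, the two
central 18-cycles `A` and `B`, and the inner 6-cycle `I`. -/
inductive D2V
  | O : ZMod 6 → D2V
  | A : ZMod 18 → D2V
  | B : ZMod 18 → D2V
  | I : ZMod 6 → D2V
  deriving DecidableEq, Fintype

open D2V in
/-- The adjacency generating relation of `D_2`: the four cycles, the 6 outer radial
edges `O_i — A_{3i}`, the 6 inner radial edges `I_i — B_{3i}`, and the 12 central
radial edges `A_k — B_{k+1}` for `k ≡ 1 (mod 3)` and `A_k — B_{k+2}` for `k ≡ 2 (mod 3)`. -/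
def d2Rel : D2V → D2V → Bool
  | O i, O j => j == i + 1
  | A k, A l => l == k + 1
  | B k, B l => l == k + 1
  | I i, I j => j == i + 1
  | O i, A k => k == (3 * i.val : ZMod 18)
  | I i, B k => k == (3 * i.val : ZMod 18)
  | A k, B l => (k.val % 3 == 1 && l == k + 1) || (k.val % 3 == 2 && l == k + 2)
  | _, _ => false

/-- The fullerene nanodisc `D_2`. -/
def D2 : SimpleGraph D2V := SimpleGraph.fromRel (fun a b => d2Rel a b = true)

/-! Every vertex of the outer cycle `O` and of the cycle `A` carries a radial edge, so if all
radial edges have color `t`, these two cycles are totally colored with the three colors other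
than `t`. On a path totally colored with three colors the vertex colors repeat with period
three, and any three consecutive vertices use all three colors. Hence `A₀, A₃, A₆` share a
color `c ≠ t`, while `O₀, O₁, O₂`, which are joined to `A₀, A₃, A₆`, use up all three colors
other than `t`, one of which must be `c`. -/

theorem fin_four_eq_or_eq_or_eq_of_ne {a b c t x : Fin 4} :
    a ≠ b → a ≠ c → b ≠ c → a ≠ t → b ≠ t → c ≠ t → x ≠ t → x = a ∨ x = b ∨ x = c := by
  revert a b c t x
  decide

namespace IsTotalColoring

section

variable {V C : Type*} {G : SimpleGraph V} {cv : V → C} {ce : Sym2 V → C} {t : C} {u v w : V}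

theorem edge_color_ne_right (hc : IsTotalColoring G cv ce) (huv : G.Adj u v) :
    ce s(u, v) ≠ cv v := by
  rw [Sym2.eq_swap]
  exact hc.2.1 huv.symm

theorem edge_color_ne_edge_color (hc : IsTotalColoring G cv ce) (huv : G.Adj u v)
    (hvw : G.Adj v w) (huw : u ≠ w) : ce s(u, v) ≠ ce s(v, w) := by
  rw [Sym2.eq_swap]
  exact hc.2.2 huv.symm hvw huw

theorem color_ne_of_edge_color_eq (hc : IsTotalColoring G cv ce) (huv : G.Adj u v)
    (ht : ce s(u, v) = t) : cv u ≠ t :=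
  ht ▸ (hc.2.1 huv).symm

theorem edge_color_ne_of_edge_color_eq (hc : IsTotalColoring G cv ce) (huv : G.Adj u v)
    (ht : ce s(u, v) = t) (huw : G.Adj u w) (hwv : w ≠ v) : ce s(u, w) ≠ t :=
  ht ▸ hc.2.2 huw huv hwv

end

section

variable {V : Type*} {G : SimpleGraph V} {cv : V → Fin 4} {ce : Sym2 V → Fin 4} {t : Fin 4}

/-- The colors at `v` other than `t` are `cv v` and the colors of the two path edges, and `u`
avoids the first two. -/
theorem color_eq_edge_color_of_path {u v w : V} (hc : IsTotalColoring G cv ce)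
    (huv : G.Adj u v) (hvw : G.Adj v w) (huw : u ≠ w) (hu : cv u ≠ t) (hv : cv v ≠ t)
    (huvt : ce s(u, v) ≠ t) (hvwt : ce s(v, w) ≠ t) : cv u = ce s(v, w) := by
  obtain h | h | h := fin_four_eq_or_eq_or_eq_of_ne (hc.edge_color_ne_right huv).symm
    (hc.2.1 hvw).symm (hc.edge_color_ne_edge_color huv hvw huw) hv huvt hvwt hu
  · exact absurd h (hc.1 huv)
  · exact absurd h.symm (hc.2.1 huv)
  · exact h

section Walk

variable {ι : Type*} {f : ι → V}

theorem walk_color_ne (hc : IsTotalColoring G cv ce)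
    (hrad : ∀ k, ∃ r ∉ Set.range f, G.Adj (f k) r ∧ ce s(f k, r) = t) (k : ι) :
    cv (f k) ≠ t := by
  obtain ⟨r, -, hr, hrt⟩ := hrad k
  exact hc.color_ne_of_edge_color_eq hr hrt

variable [AddMonoidWithOne ι]

theorem walk_edge_color_ne (hc : IsTotalColoring G cv ce) (hadj : ∀ k, G.Adj (f k) (f (k + 1)))
    (hrad : ∀ k, ∃ r ∉ Set.range f, G.Adj (f k) r ∧ ce s(f k, r) = t) (k : ι) :
    ce s(f k, f (k + 1)) ≠ t := by
  obtain ⟨r, hr, hadjr, hrt⟩ := hrad k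
  exact hc.edge_color_ne_of_edge_color_eq hadjr hrt (hadj k) fun h ↦ hr ⟨_, h⟩

/-- Both ends of a path of length two on the walk take the color of the other path edge,
and these two edges meet. -/
theorem walk_color_ne_add_two (hc : IsTotalColoring G cv ce)
    (hadj : ∀ k, G.Adj (f k) (f (k + 1))) (hne : ∀ k, f k ≠ f (k + 2))
    (hrad : ∀ k, ∃ r ∉ Set.range f, G.Adj (f k) r ∧ ce s(f k, r) = t) (k : ι) :
    cv (f k) ≠ cv (f (k + 2)) := by
  have h2 : k + 1 + 1 = k + 2 := by norm_num [add_assoc]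
  have hadj' := hadj (k + 1)
  have het := hc.walk_edge_color_ne hadj hrad (k + 1)
  rw [h2] at hadj' het
  have hv := hc.walk_color_ne hrad
  have het' := hc.walk_edge_color_ne hadj hrad k
  have hfirst := hc.color_eq_edge_color_of_path (hadj k) hadj' (hne k) (hv _) (hv _) het' het
  have hlast := hc.color_eq_edge_color_of_path hadj'.symm (hadj k).symm (hne k).symm (hv _)
    (hv _) (by rwa [Sym2.eq_swap]) (by rwa [Sym2.eq_swap])
  rw [hfirst, hlast]
  exact hc.2.2 hadj' (hadj k).symm (hne k).symm

theorem walk_color_eq_or_eq_or_eq (hc : IsTotalColoring G cv ce)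
    (hadj : ∀ k, G.Adj (f k) (f (k + 1))) (hne : ∀ k, f k ≠ f (k + 2))
    (hrad : ∀ k, ∃ r ∉ Set.range f, G.Adj (f k) r ∧ ce s(f k, r) = t) (k : ι) {x : Fin 4}
    (hx : x ≠ t) : x = cv (f k) ∨ x = cv (f (k + 1)) ∨ x = cv (f (k + 2)) := by
  have h12 := hc.1 (hadj (k + 1))
  rw [show k + 1 + 1 = k + 2 by norm_num [add_assoc]] at h12
  have hv := hc.walk_color_ne hrad
  exact fin_four_eq_or_eq_or_eq_of_ne (hc.1 (hadj k)) (hc.walk_color_ne_add_two hadj hne hrad k)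
    h12 (hv _) (hv _) (hv _) hx

theorem walk_color_add_three (hc : IsTotalColoring G cv ce)
    (hadj : ∀ k, G.Adj (f k) (f (k + 1))) (hne : ∀ k, f k ≠ f (k + 2))
    (hrad : ∀ k, ∃ r ∉ Set.range f, G.Adj (f k) r ∧ ce s(f k, r) = t) (k : ι) :
    cv (f (k + 3)) = cv (f k) := by
  have h2 := hc.walk_color_ne_add_two hadj hne hrad (k + 1)
  have h3 := hc.1 (hadj (k + 2))
  rw [show k + 1 + 2 = k + 3 by norm_num [add_assoc]] at h2
  rw [show k + 2 + 1 = k + 3 by norm_num [add_assoc]] at h3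
  obtain h | h | h := hc.walk_color_eq_or_eq_or_eq hadj hne hrad k (hc.walk_color_ne hrad _)
  · exact h
  · exact absurd h.symm h2
  · exact absurd h.symm h3

end Walk

end

end IsTotalColoring

section D2

open D2V

theorem D2_adj_O_O_add_one (i : ZMod 6) : D2.Adj (O i) (O (i + 1)) :=
  ⟨by simp; decide, Or.inl (by simp [d2Rel])⟩

theorem D2_adj_A_A_add_one (k : ZMod 18) : D2.Adj (A k) (A (k + 1)) :=
  ⟨by simp; decide, Or.inl (by simp [d2Rel])⟩

theorem D2_adj_O_A (i : ZMod 6) : D2.Adj (O i) (A (3 * i.val : ZMod 18)) :=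
  ⟨by simp, Or.inl (by simp [d2Rel])⟩

theorem D2_O_ne_O_add_two (i : ZMod 6) : O i ≠ O (i + 2) := by
  simp only [ne_eq, O.injEq]
  revert i
  decide

theorem D2_A_ne_A_add_two (k : ZMod 18) : A k ≠ A (k + 2) := by
  simp only [ne_eq, A.injEq]
  revert k
  decide

theorem D2_exists_radial_edge_A {C : Type*} {ce : Sym2 D2V → C} {t : C}
    (hO : ∀ i : ZMod 6, ce s(O i, A (3 * i.val : ZMod 18)) = t)
    (hA₁ : ∀ k : ZMod 18, k.val % 3 = 1 → ce s(A k, B (k + 1)) = t)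
    (hA₂ : ∀ k : ZMod 18, k.val % 3 = 2 → ce s(A k, B (k + 2)) = t) (k : ZMod 18) :
    ∃ r ∉ Set.range A, D2.Adj (A k) r ∧ ce s(A k, r) = t := by
  obtain hk | hk | hk : k.val % 3 = 0 ∨ k.val % 3 = 1 ∨ k.val % 3 = 2 := by omega
  · obtain ⟨i, rfl⟩ : ∃ i : ZMod 6, (3 * i.val : ZMod 18) = k := by revert k; decide
    exact ⟨O i, by simp, (D2_adj_O_A i).symm, by rw [Sym2.eq_swap]; exact hO i⟩
  · exact ⟨B (k + 1), by simp, ⟨by simp, Or.inl (by simp [d2Rel, hk])⟩, hA₁ k hk⟩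
  · exact ⟨B (k + 2), by simp, ⟨by simp, Or.inl (by simp [d2Rel, hk])⟩, hA₂ k hk⟩

end D2

theorem D2_no_four_total_coloring_all_radial_monochromatic :
    ¬ ∃ (cv : D2V → Fin 4) (ce : Sym2 D2V → Fin 4) (t : Fin 4),
      IsTotalColoring D2 cv ce ∧
      (∀ i : ZMod 6, ce s(D2V.O i, D2V.A (3 * i.val : ZMod 18)) = t) ∧
      (∀ i : ZMod 6, ce s(D2V.I i, D2V.B (3 * i.val : ZMod 18)) = t) ∧
      (∀ k : ZMod 18, k.val % 3 = 1 → ce s(D2V.A k, D2V.B (k + 1)) = t) ∧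
      (∀ k : ZMod 18, k.val % 3 = 2 → ce s(D2V.A k, D2V.B (k + 2)) = t) := by
  rintro ⟨cv, ce, t, hc, hO, -, hA₁, hA₂⟩
  have hradA := D2_exists_radial_edge_A hO hA₁ hA₂
  have hradO : ∀ i, ∃ r ∉ Set.range D2V.O, D2.Adj (D2V.O i) r ∧ ce s(D2V.O i, r) = t :=
    fun i ↦ ⟨_, by simp, D2_adj_O_A i, hO i⟩
  have hA₃ : cv (D2V.A 3) = cv (D2V.A 0) :=
    hc.walk_color_add_three D2_adj_A_A_add_one D2_A_ne_A_add_two hradA 0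
  have hA₆ : cv (D2V.A 6) = cv (D2V.A 3) :=
    hc.walk_color_add_three D2_adj_A_A_add_one D2_A_ne_A_add_two hradA 3
  obtain h | h | h := hc.walk_color_eq_or_eq_or_eq D2_adj_O_O_add_one D2_O_ne_O_add_two hradO 0
    (hc.walk_color_ne hradA 0)
  · exact hc.1 (D2_adj_O_A 0) h.symm
  · exact hc.1 (D2_adj_O_A 1) (h.symm.trans hA₃.symm)
  · exact hc.1 (D2_adj_O_A 2) (h.symm.trans (hA₆.trans hA₃).symm)
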